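/- Let d ≥ 1 be an integer, s ≥ 0 and α ∈ (0,1). There exist C > 0 and δ₀ ∈ (0,1) such that for all δ ∈ (0, δ₀], ‖⟨x⟩^s Δ(f_δ^α)‖_{L²(ℝ^d)} ≤ C δ^{α − 1 − d/4}, where Δ denotes the Laplacian and ⟨x⟩ = √(1+|x|²). -/

import Mathlib

open MeasureTheory Real

/-- The Laplacian `Δu = ∑_j ∂²u/∂x_j²` of a function on `ℝ^d`. -/
noncomputable def laplacian (d : ℕ) (u : EuclideanSpace ℝ (Fin d) → ℝ)
    (x : EuclideanSpace ℝ (Fin d)) : ℝ :=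
  ∑ j : Fin d,
    fderiv ℝ (fun y => fderiv ℝ u y (EuclideanSpace.single j 1)) x
      (EuclideanSpace.single j 1)

/-- The forcing term `f_δ(x) = 1 - e^{-δ} e^{-|x|²/2}`. -/
noncomputable def fδ (d : ℕ) (δ : ℝ) (x : EuclideanSpace ℝ (Fin d)) : ℝ :=
  1 - Real.exp (-δ) * Real.exp (-‖x‖ ^ 2 / 2)

/-!
With `f = f_δ(x)` and `t = |x|²` we have `f_δ^α = φ(|x|²)` for `φ(t) = (1 - e^{-δ} e^{-t/2})^α`,
and the radial formula `Δ(φ ∘ |·|²) = 2d φ'(|x|²) + 4|x|² φ''(|x|²)` gives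
`Δ(f_δ^α)(x) = α f^{α-1} (1 - f) (d - t) - α (1 - α) t f^{α-2} (1 - f)²`.
The more singular factor `f^{α-2}` is tamed by `t (1 - f) ≤ 2 f`, and `f ≥ δ/2`, so
`|Δ(f_δ^α)(x)| ≤ C δ^{α-1} (1 + t) e^{-t/2}`. The Gaussian absorbs the weight `⟨x⟩^s` up to
`e^{-t/4}`, so the weighted `L²` norm is `O(δ^{α-1})`, and `δ^{α-1} ≤ δ^{α-1-d/4}` for `δ ≤ 1`.
-/

theorem HasDerivAt.hasFDerivAt_comp_norm_sq {E : Type*} [NormedAddCommGroup E]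
    [InnerProductSpace ℝ E] {φ : ℝ → ℝ} {a : ℝ} {y : E}
    (h : HasDerivAt φ a (‖y‖ ^ 2)) :
    HasFDerivAt (fun z => φ (‖z‖ ^ 2)) ((2 * a) • innerSL ℝ y) y := by
  refine (h.comp_hasFDerivAt y (hasFDerivAt_id y).norm_sq).congr_fderiv ?_
  ext v
  simp only [id_eq, ContinuousLinearMap.comp_id, smul_apply,
    coe_innerSL_apply, nsmul_eq_mul, Nat.cast_ofNat, smul_eq_mul]
  ring

theorem laplacian_comp_norm_sq {d : ℕ} {φ φ' φ'' : ℝ → ℝ}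
    (hφ : ∀ t, 0 ≤ t → HasDerivAt φ (φ' t) t) (hφ' : ∀ t, 0 ≤ t → HasDerivAt φ' (φ'' t) t)
    (x : EuclideanSpace ℝ (Fin d)) :
    laplacian d (fun y => φ (‖y‖ ^ 2)) x =
      2 * d * φ' (‖x‖ ^ 2) + 4 * ‖x‖ ^ 2 * φ'' (‖x‖ ^ 2) := by
  have hpartial : ∀ j, (fun y => fderiv ℝ (fun z => φ (‖z‖ ^ 2)) y (EuclideanSpace.single j 1))
      = fun y : EuclideanSpace ℝ (Fin d) => 2 * φ' (‖y‖ ^ 2) * y j := by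
    intro j
    funext y
    rw [((hφ _ (sq_nonneg ‖y‖)).hasFDerivAt_comp_norm_sq).fderiv]
    simp [EuclideanSpace.inner_single_right]
  have hsecond : ∀ j, fderiv ℝ (fun y : EuclideanSpace ℝ (Fin d) => 2 * φ' (‖y‖ ^ 2) * y j) x
      (EuclideanSpace.single j 1) = 4 * φ'' (‖x‖ ^ 2) * x j ^ 2 + 2 * φ' (‖x‖ ^ 2) := by
    intro j
    have h : HasFDerivAt (fun y : EuclideanSpace ℝ (Fin d) => 2 * φ' (‖y‖ ^ 2) * y j) _ x :=
      (((hφ' _ (sq_nonneg ‖x‖)).hasFDerivAt_comp_norm_sq).const_mul 2).mul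
        (EuclideanSpace.proj (𝕜 := ℝ) j).hasFDerivAt
    rw [h.fderiv]
    simp only [add_apply, smul_apply, PiLp.proj_apply,
      PiLp.single_eq_same, smul_eq_mul, mul_one, coe_innerSL_apply,
      EuclideanSpace.inner_single_right, ringHom_apply, one_mul]
    ring
  unfold laplacian
  simp_rw [hpartial, hsecond]
  simp only [EuclideanSpace.norm_sq_eq, norm_eq_abs, sq_abs, Finset.sum_add_distrib,
    ← Finset.mul_sum, Finset.sum_const, Finset.card_univ, Fintype.card_fin, nsmul_eq_mul]
  ring

theorem laplacian_fδ_rpow (d : ℕ) {δ : ℝ} (hδ : 0 < δ) (α : ℝ) (x : EuclideanSpace ℝ (Fin d)) :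
    laplacian d (fun y => fδ d δ y ^ α) x =
      α * fδ d δ x ^ (α - 1) * (1 - fδ d δ x) * (d - ‖x‖ ^ 2)
        - α * (1 - α) * ‖x‖ ^ 2 * fδ d δ x ^ (α - 2) * (1 - fδ d δ x) ^ 2 := by
  set h : ℝ → ℝ := fun t => 1 - exp (-δ) * exp (-t / 2)
  have hh : ∀ t, HasDerivAt h ((1 - h t) / 2) t := fun t => by
    have := (((hasDerivAt_id t).neg.div_const 2).exp.const_mul (exp (-δ))).const_sub 1
    exact this.congr_deriv (by simp only [Pi.neg_apply, id_eq, sub_sub_cancel, h]; ring)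
  have hpos : ∀ t, 0 ≤ t → 0 < h t := fun t ht => by
    have : exp (-δ) * exp (-t / 2) < 1 :=
      mul_lt_one_of_nonneg_of_lt_one_left (exp_pos _).le (exp_lt_one_iff.mpr (by linarith))
        (exp_le_one_iff.mpr (by linarith))
    simp only [h]
    linarith
  have hφ : ∀ t, 0 ≤ t →
      HasDerivAt (fun t => h t ^ α) (α / 2 * h t ^ (α - 1) * (1 - h t)) t := fun t ht =>
    ((hh t).rpow_const (Or.inl (hpos t ht).ne')).congr_deriv (by ring)
  have hφ' : ∀ t, 0 ≤ t → HasDerivAt (fun t => α / 2 * h t ^ (α - 1) * (1 - h t))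
      (α / 4 * ((α - 1) * h t ^ (α - 2) * (1 - h t) ^ 2 - h t ^ (α - 1) * (1 - h t))) t :=
    fun t ht => by
      have := (((hh t).rpow_const (p := α - 1) (Or.inl (hpos t ht).ne')).const_mul (α / 2)).mul
        ((hh t).const_sub 1)
      refine this.congr_deriv ?_
      rw [show α - 1 - 1 = α - 2 by ring]
      ring
  change laplacian d (fun y => h (‖y‖ ^ 2) ^ α) x = _
  rw [laplacian_comp_norm_sq hφ hφ' x]
  change _ = α * h (‖x‖ ^ 2) ^ (α - 1) * (1 - h (‖x‖ ^ 2)) * (d - ‖x‖ ^ 2)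
        - α * (1 - α) * ‖x‖ ^ 2 * h (‖x‖ ^ 2) ^ (α - 2) * (1 - h (‖x‖ ^ 2)) ^ 2
  ring

theorem half_le_one_sub_exp_neg {δ : ℝ} (hδ0 : 0 ≤ δ) (hδ1 : δ ≤ 1) :
    δ / 2 ≤ 1 - exp (-δ) := by
  have hinv : exp (-δ) * exp δ = 1 := by rw [← exp_add, neg_add_cancel, exp_zero]
  nlinarith [mul_le_mul_of_nonneg_left (add_one_le_exp δ) (exp_pos (-δ)).le]

theorem mul_exp_neg_le_one_sub_exp_neg (u : ℝ) : u * exp (-u) ≤ 1 - exp (-u) := by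
  have hinv : exp u * exp (-u) = 1 := by rw [← exp_add, add_neg_cancel, exp_zero]
  nlinarith [add_one_le_exp u, exp_pos (-u)]

theorem half_le_fδ (d : ℕ) {δ : ℝ} (hδ0 : 0 ≤ δ) (hδ1 : δ ≤ 1) (x : EuclideanSpace ℝ (Fin d)) :
    δ / 2 ≤ fδ d δ x := by
  have : exp (-‖x‖ ^ 2 / 2) ≤ 1 := exp_le_one_iff.mpr (by nlinarith [sq_nonneg ‖x‖])
  have := mul_le_of_le_one_right (exp_pos (-δ)).le this
  unfold fδ
  linarith [half_le_one_sub_exp_neg hδ0 hδ1]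

theorem norm_sq_mul_one_sub_fδ_le (d : ℕ) {δ : ℝ} (hδ : 0 ≤ δ) (x : EuclideanSpace ℝ (Fin d)) :
    ‖x‖ ^ 2 * (1 - fδ d δ x) ≤ 2 * fδ d δ x := by
  have htail := mul_exp_neg_le_one_sub_exp_neg (‖x‖ ^ 2 / 2)
  rw [← neg_div] at htail
  have hc : exp (-δ) ≤ 1 := exp_le_one_iff.mpr (by linarith)
  have hg := exp_pos (-‖x‖ ^ 2 / 2)
  unfold fδ
  nlinarith [sq_nonneg ‖x‖, mul_le_mul_of_nonneg_left hc (mul_nonneg (sq_nonneg ‖x‖) hg.le)]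

theorem abs_laplacian_profile_le {α d f t : ℝ} (hα0 : 0 ≤ α) (hα1 : α ≤ 1) (hd : 0 ≤ d)
    (ht : 0 ≤ t) (hf0 : 0 < f) (hf1 : f ≤ 1) (htf : t * (1 - f) ≤ 2 * f) :
    |α * f ^ (α - 1) * (1 - f) * (d - t) - α * (1 - α) * t * f ^ (α - 2) * (1 - f) ^ 2|
      ≤ α * (d + 2) * f ^ (α - 1) * (1 - f) * (1 + t) := by
  have hsplit : α * f ^ (α - 1) * (1 - f) * (d - t) - α * (1 - α) * t * f ^ (α - 2) * (1 - f) ^ 2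
      = α * f ^ (α - 1) * (1 - f) * ((d - t) - (1 - α) * (t * (1 - f) / f)) := by
    rw [show α - 2 = α - 1 - 1 by ring, rpow_sub_one hf0.ne' (α - 1)]
    field_simp
  have hP : 0 ≤ α * f ^ (α - 1) * (1 - f) :=
    mul_nonneg (mul_nonneg hα0 (rpow_nonneg hf0.le _)) (by linarith)
  have hq0 : 0 ≤ t * (1 - f) / f := div_nonneg (mul_nonneg ht (by linarith)) hf0.le
  have hq2 : t * (1 - f) / f ≤ 2 := (div_le_iff₀ hf0).mpr htf
  have hbracket : |(d - t) - (1 - α) * (t * (1 - f) / f)| ≤ (d + 2) * (1 + t) := by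
    rw [abs_le]
    constructor <;> nlinarith
  rw [hsplit, abs_mul, abs_of_nonneg hP]
  calc _ ≤ α * f ^ (α - 1) * (1 - f) * ((d + 2) * (1 + t)) := by gcongr
    _ = α * (d + 2) * f ^ (α - 1) * (1 - f) * (1 + t) := by ring

theorem abs_laplacian_fδ_rpow_le (d : ℕ) {δ α : ℝ} (hδ0 : 0 < δ) (hδ1 : δ ≤ 1) (hα0 : 0 ≤ α)
    (hα1 : α ≤ 1) (x : EuclideanSpace ℝ (Fin d)) :
    |laplacian d (fun y => fδ d δ y ^ α) x|
      ≤ α * (d + 2) * 2 ^ (1 - α) * δ ^ (α - 1) * ((1 + ‖x‖ ^ 2) * exp (-‖x‖ ^ 2 / 2)) := by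
  have hf : δ / 2 ≤ fδ d δ x := half_le_fδ d hδ0.le hδ1 x
  have hgauss : 1 - fδ d δ x ≤ exp (-‖x‖ ^ 2 / 2) := by
    simpa [fδ] using
      mul_le_of_le_one_left (exp_pos _).le (exp_le_one_iff.mpr (neg_nonpos.mpr hδ0.le))
  have hf1 : fδ d δ x ≤ 1 := by
    have : 0 < exp (-δ) * exp (-‖x‖ ^ 2 / 2) := by positivity
    unfold fδ
    linarith
  rw [laplacian_fδ_rpow d hδ0]
  calc _ ≤ α * (d + 2) * fδ d δ x ^ (α - 1) * (1 - fδ d δ x) * (1 + ‖x‖ ^ 2) :=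
        abs_laplacian_profile_le hα0 hα1 (by positivity) (sq_nonneg _) (by linarith) hf1
          (norm_sq_mul_one_sub_fδ_le d hδ0.le x)
    _ ≤ α * (d + 2) * (δ / 2) ^ (α - 1) * exp (-‖x‖ ^ 2 / 2) * (1 + ‖x‖ ^ 2) := by
        gcongr α * (d + 2) * ?_ * ?_ * (1 + ‖x‖ ^ 2)
        exact rpow_le_rpow_of_nonpos (by positivity) hf (by linarith)
    _ = _ := by
        have h2 : (2 : ℝ) ^ (1 - α) = 2 / 2 ^ α := by rw [rpow_sub two_pos, rpow_one]
        rw [div_rpow hδ0.le zero_le_two, rpow_sub_one two_ne_zero, h2]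
        field_simp

theorem one_add_rpow_mul_exp_neg_half_le {p : ℝ} (hp : 0 ≤ p) {t : ℝ} (ht : 0 ≤ t) :
    (1 + t) ^ p * exp (-t / 2) ≤ (4 * p) ^ p * exp (1 / 4) * exp (-t / 4) := by
  have h := ProbabilityTheory.rpow_abs_le_mul_exp_abs (1 + t) hp (t := 1 / 4) (by norm_num)
  rw [abs_of_nonneg (by linarith), abs_of_pos (by norm_num)] at h
  calc (1 + t) ^ p * exp (-t / 2) ≤ (p / (1 / 4)) ^ p * exp (1 / 4 * (1 + t)) * exp (-t / 2) := by
        gcongr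
    _ = (4 * p) ^ p * exp (1 / 4) * exp (-t / 4) := by
        rw [mul_assoc, mul_assoc, ← exp_add, ← exp_add]
        ring_nf

theorem integrable_exp_neg_mul_sq_norm {V : Type*} [NormedAddCommGroup V] [InnerProductSpace ℝ V]
    [FiniteDimensional ℝ V] [MeasurableSpace V] [BorelSpace V] {b : ℝ} (hb : 0 < b) :
    Integrable (fun v : V => exp (-b * ‖v‖ ^ 2)) := by
  have h := (GaussianFourier.integrable_cexp_neg_mul_sq_norm_add (V := V) (b := b)
    (by simpa using hb) 0 0).re
  simpa [← Complex.ofReal_pow, ← Complex.ofReal_mul, ← Complex.ofReal_neg, Complex.exp_ofReal_re]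
    using h

theorem sqrt_integral_sq_le_of_abs_le {X : Type*} [MeasurableSpace X] {μ : Measure X}
    {v w : X → ℝ} {B : ℝ} (hB : 0 ≤ B) (hw : Integrable (fun x => w x ^ 2) μ)
    (h : ∀ x, |v x| ≤ B * w x) :
    √(∫ x, v x ^ 2 ∂μ) ≤ B * √(∫ x, w x ^ 2 ∂μ) := by
  have hint : ∫ x, v x ^ 2 ∂μ ≤ B ^ 2 * ∫ x, w x ^ 2 ∂μ := by
    rw [← integral_const_mul]
    refine integral_mono_of_nonneg (ae_of_all _ fun x => sq_nonneg _) (hw.const_mul _)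
      (ae_of_all _ fun x => ?_)
    calc v x ^ 2 = |v x| ^ 2 := (sq_abs _).symm
      _ ≤ (B * w x) ^ 2 := pow_le_pow_left₀ (abs_nonneg _) (h x) 2
      _ = B ^ 2 * w x ^ 2 := by ring
  calc √(∫ x, v x ^ 2 ∂μ) ≤ √(B ^ 2 * ∫ x, w x ^ 2 ∂μ) := sqrt_le_sqrt hint
    _ = B * √(∫ x, w x ^ 2 ∂μ) := by rw [sqrt_mul (sq_nonneg B), sqrt_sq hB]

theorem exists_abs_weight_mul_laplacian_fδ_rpow_le (d : ℕ) {s α : ℝ} (hs : 0 ≤ s)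
    (hα0 : 0 ≤ α) (hα1 : α ≤ 1) :
    ∃ K, 0 ≤ K ∧ ∀ δ, 0 < δ → δ ≤ 1 → ∀ x : EuclideanSpace ℝ (Fin d),
      |(1 + ‖x‖ ^ 2) ^ (s / 2) * laplacian d (fun y => fδ d δ y ^ α) x|
        ≤ K * δ ^ (α - 1) * exp (-‖x‖ ^ 2 / 4) := by
  set p := s / 2 + 1
  refine ⟨α * (d + 2) * 2 ^ (1 - α) * ((4 * p) ^ p * exp (1 / 4)), by positivity,
    fun δ hδ0 hδ1 x => ?_⟩
  rw [abs_mul, abs_of_nonneg (by positivity)]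
  calc _ ≤ (1 + ‖x‖ ^ 2) ^ (s / 2) * (α * (d + 2) * 2 ^ (1 - α) * δ ^ (α - 1)
        * ((1 + ‖x‖ ^ 2) * exp (-‖x‖ ^ 2 / 2))) := by
        gcongr
        exact abs_laplacian_fδ_rpow_le d hδ0 hδ1 hα0 hα1 x
    _ = α * (d + 2) * 2 ^ (1 - α) * δ ^ (α - 1) * ((1 + ‖x‖ ^ 2) ^ p * exp (-‖x‖ ^ 2 / 2)) := by
        rw [rpow_add_one (by positivity)]
        ring
    _ ≤ α * (d + 2) * 2 ^ (1 - α) * δ ^ (α - 1)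
        * ((4 * p) ^ p * exp (1 / 4) * exp (-‖x‖ ^ 2 / 4)) := by
        gcongr _ * ?_
        exact one_add_rpow_mul_exp_neg_half_le (by positivity) (sq_nonneg ‖x‖)
    _ = _ := by ring

theorem stmt_9_general (d : ℕ) (s : ℝ) (hs : 0 ≤ s) (α : ℝ)
    (hα : α ∈ Set.Ioo (0 : ℝ) 1) :
    ∃ C : ℝ, 0 < C ∧ ∃ δ₀ ∈ Set.Ioo (0 : ℝ) 1, ∀ δ ∈ Set.Ioc (0 : ℝ) δ₀,
      Real.sqrt (∫ x : EuclideanSpace ℝ (Fin d),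
          ((1 + ‖x‖ ^ 2) ^ (s / 2) * laplacian d (fun y => fδ d δ y ^ α) x) ^ 2) ≤
        C * δ ^ (α - 1 - d / 4) := by
  obtain ⟨hα0, hα1⟩ := hα
  obtain ⟨K, hK, hbound⟩ := exists_abs_weight_mul_laplacian_fδ_rpow_le d hs hα0.le hα1.le
  set W := √(∫ x : EuclideanSpace ℝ (Fin d), exp (-‖x‖ ^ 2 / 4) ^ 2)
  have hgauss : Integrable (fun x : EuclideanSpace ℝ (Fin d) => exp (-‖x‖ ^ 2 / 4) ^ 2) := by
    refine (integrable_exp_neg_mul_sq_norm one_half_pos).congr (ae_of_all _ fun x => ?_)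
    simp only [sq (exp _), ← exp_add]
    ring_nf
  refine ⟨K * W + 1, by positivity, 1 / 2, by norm_num, fun δ ⟨hδ0, hδ⟩ => ?_⟩
  have hδE : δ ^ (α - 1) ≤ δ ^ (α - 1 - d / 4) :=
    rpow_le_rpow_of_exponent_ge hδ0 (by linarith) (sub_le_self _ (by positivity))
  calc _ ≤ K * δ ^ (α - 1) * W :=
        sqrt_integral_sq_le_of_abs_le (by positivity) hgauss (hbound δ hδ0 (by linarith))
    _ ≤ (K * W + 1) * δ ^ (α - 1 - d / 4) := by
      have : 0 ≤ K * W := by positivity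
      nlinarith [rpow_pos_of_pos hδ0 (α - 1 - d / 4)]

theorem stmt_9 (d : ℕ) (hd : 1 ≤ d) (s : ℝ) (hs : 0 ≤ s) (α : ℝ)
    (hα : α ∈ Set.Ioo (0 : ℝ) 1) :
    ∃ C : ℝ, 0 < C ∧ ∃ δ₀ ∈ Set.Ioo (0 : ℝ) 1, ∀ δ ∈ Set.Ioc (0 : ℝ) δ₀,
      Real.sqrt (∫ x : EuclideanSpace ℝ (Fin d),
          ((1 + ‖x‖ ^ 2) ^ (s / 2) * laplacian d (fun y => fδ d δ y ^ α) x) ^ 2) ≤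
        C * δ ^ (α - 1 - d / 4) :=
  stmt_9_general d s hs α hα
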